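/- arXiv:1906.07420 — 2 statements merged into one kernel-verified Lean document; each statement's English description precedes it below -/
import Mathlib

section
/- Let λ be a partition with ℓ(λ) < n and gcd(n, |λ|) = 1, and set M = #SSYT_n(λ)/n (an integer). Then in ℤ[q] one has the congruence Σ_{T ∈ SSYT_n(λ)} q^{Σ_{i=1}^n (i−1)c_i(T)} ≡ M·(1 + q + q^2 + ⋯ + q^{n−1}) (mod q^n − 1); equivalently, q^{−κ(λ)} s_λ(1, q, …, q^{n−1}) ≡ M·(1 + q + ⋯ + q^{n−1}) (mod q^n − 1). -/
/-!
The Bender–Knuth move `t_k` is an involution of `SSYT_n(λ)` exchanging the numbers of entries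
`k` and `k + 1`. Hence `t_{n-2} ∘ ⋯ ∘ t_0` is a permutation of `SSYT_n(λ)` rotating the content
`(c_0, …, c_{n-1})` to `(c_1, …, c_{n-1}, c_0)`, which changes the weight `∑ i c_i` into
`∑ i c_i - |λ| + n c_0`. For `P = ∑_T q^{weight T}` this gives `q^{|λ|} P ≡ P (mod q^n - 1)`, and
since `|λ|` is invertible mod `n`, also `(q - 1) P ≡ 0`. Dividing by `q - 1`, `P` is a multiple
`S Q` of `S = 1 + q + ⋯ + q^{n-1}`, so `P ≡ Q(1) S (mod q^n - 1)`, and `P(1) = n M` forces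
`Q(1) = M`.
-/

open Finset

/-- Semistandard Young tableaux of shape `μ` with entries in `{0, …, n-1}`
(the 0-indexed version of entries in `{1, …, n}`). -/
def SSYTn (μ : YoungDiagram) (n : ℕ) : Type :=
  {T : SemistandardYoungTableau μ // ∀ i j : ℕ, (i, j) ∈ μ → T i j < n}

noncomputable instance (μ : YoungDiagram) (n : ℕ) : Fintype (SSYTn μ n) := by
  apply Fintype.ofInjective
    (fun (T : SSYTn μ n) (c : μ.cells) =>
      (⟨T.1 c.1.1 c.1.2,
        Nat.lt_succ_of_lt (T.2 c.1.1 c.1.2 c.2)⟩ :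
        Fin (n + 1)))
  intro T T' h
  apply Subtype.ext
  apply SemistandardYoungTableau.ext
  intro i j
  by_cases hij : (i, j) ∈ μ
  · have := congrFun h ⟨(i, j), (YoungDiagram.mem_cells _).mpr hij⟩
    simpa using congrArg Fin.val this
  · rw [T.1.zeros hij, T'.1.zeros hij]

/-- The content of a tableau: `ssytContent μ n T k` is the number of entries of `T`
equal to `k` (0-indexed). -/
def ssytContent (μ : YoungDiagram) (n : ℕ) (T : SSYTn μ n) : Fin n → ℕ :=
  fun k => (μ.cells.filter (fun c => T.1 c.1 c.2 = (k : ℕ))).card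

/-- The cyclic shift `c(x_1,…,x_n) = (x_n, x_1, …, x_{n-1})` (0-indexed). -/
def cycShift {n : ℕ} {α : Type*} (x : Fin n → α) : Fin n → α :=
  fun i => if _h : (i : ℕ) = 0 then x ⟨n - 1, by have := i.isLt; omega⟩
           else x ⟨(i : ℕ) - 1, by have := i.isLt; omega⟩


section CyclicCongruence

variable {R : Type*} [CommRing R]

theorem pow_sub_one_dvd_pow_sub_pow_mod (x : R) (n a : ℕ) :
    x ^ n - 1 ∣ x ^ a - x ^ (a % n) := by
  have h : x ^ a - x ^ (a % n) = x ^ (a % n) * (x ^ (n * (a / n)) - 1) := by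
    rw [mul_sub, ← pow_add, Nat.mod_add_div, mul_one]
  rw [h]
  exact (pow_one_sub_dvd_pow_mul_sub_one x n _).mul_left _

theorem pow_sub_one_dvd_pow_sub_pow_of_modEq (x : R) {n a b : ℕ} (h : a ≡ b [MOD n]) :
    x ^ n - 1 ∣ x ^ a - x ^ b := by
  have h' : x ^ a - x ^ b = (x ^ a - x ^ (a % n)) - (x ^ b - x ^ (b % n)) := by
    rw [show a % n = b % n from h]; ring
  rw [h']
  exact dvd_sub (pow_sub_one_dvd_pow_sub_pow_mod x n a) (pow_sub_one_dvd_pow_sub_pow_mod x n b)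

theorem pow_sub_one_dvd_sub_one_mul_sum_of_bijective {α : Type*} [Fintype α] (x : R)
    {n d : ℕ} {w : α → ℕ} {σ : α → α} (hσ : σ.Bijective)
    (hw : ∀ a, w (σ a) + d ≡ w a [MOD n]) :
    x ^ n - 1 ∣ (x ^ d - 1) * ∑ a, x ^ w a := by
  have h : (x ^ d - 1) * ∑ a, x ^ w a = ∑ a, (x ^ (w (σ a) + d) - x ^ w a) := by
    conv_lhs => rw [← hσ.sum_comp (fun a => x ^ w a)]
    rw [Finset.sum_sub_distrib, sub_one_mul, Finset.mul_sum]
    simp_rw [pow_add, mul_comm]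
    rw [hσ.sum_comp (fun a => x ^ w a)]
  rw [h]
  exact Finset.dvd_sum fun a _ => pow_sub_one_dvd_pow_sub_pow_of_modEq x (hw a)

theorem pow_sub_one_dvd_sub_one_mul_of_coprime {x p : R} {n d : ℕ} (hdn : d.Coprime n)
    (h : x ^ n - 1 ∣ (x ^ d - 1) * p) : x ^ n - 1 ∣ (x - 1) * p := by
  obtain rfl | rfl | hn : n = 0 ∨ n = 1 ∨ 1 < n := by omega
  · obtain rfl : d = 1 := Nat.coprime_zero_right d |>.mp hdn
    simpa using h
  · simp
  obtain ⟨m, -, hm⟩ := Nat.exists_mul_mod_eq_one_of_coprime hdn hn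
  have hdm : x ^ n - 1 ∣ (x ^ (d * m) - 1) * p :=
    h.trans (mul_dvd_mul_right (pow_one_sub_dvd_pow_mul_sub_one x d m) p)
  have hdm1 : x ^ n - 1 ∣ (x ^ (d * m) - x ^ 1) * p :=
    (pow_sub_one_dvd_pow_sub_pow_of_modEq x
      (by rw [Nat.ModEq, hm, Nat.mod_eq_of_lt hn])).mul_right p
  have : (x - 1) * p = (x ^ (d * m) - 1) * p - (x ^ (d * m) - x ^ 1) * p := by ring
  rw [this]
  exact dvd_sub hdm hdm1

open Polynomial in
theorem X_pow_sub_one_dvd_sub_mul_geom_sum [IsDomain R] [CharZero R] {p : R[X]} {n M : ℕ}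
    (hn : n ≠ 0) (hp : X ^ n - 1 ∣ (X - 1) * p) (hp1 : p.eval 1 = n * M) :
    X ^ n - 1 ∣ p - (M : R[X]) * ∑ k ∈ Finset.range n, X ^ k := by
  set s := ∑ k ∈ Finset.range n, (X : R[X]) ^ k
  have hs : (X - C 1) * s = X ^ n - 1 := by rw [C_1, mul_geom_sum]
  obtain ⟨q, rfl⟩ : s ∣ p := by
    rw [← hs, ← C_1] at hp
    exact (mul_dvd_mul_iff_left (X_sub_C_ne_zero 1)).mp hp
  have hq1 : q.eval 1 = M := by
    simpa [s, eval_geom_sum, hn] using hp1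
  obtain ⟨r, hr⟩ := X_sub_C_dvd_sub_C_eval (a := (1 : R)) (p := q)
  refine ⟨r, ?_⟩
  rw [hq1, map_natCast] at hr
  linear_combination s * hr + r * hs

end CyclicCongruence

theorem Finset.card_filter_card_filter_le_le {α : Type*} [LinearOrder α] (s : Finset α)
    (b : ℕ) :
    #(s.filter fun j => #(s.filter (· ≤ j)) ≤ b) = min b #s := by
  induction s using Finset.induction_on_max with
  | empty => simp
  | insert a s ha ih =>
    have ha' : a ∉ s := fun h => lt_irrefl a (ha a h)
    have hrank : ∀ x ∈ s, #((insert a s).filter (· ≤ x)) = #(s.filter (· ≤ x)) :=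
      fun x hx => by rw [filter_insert, if_neg (not_le.mpr (ha x hx))]
    have hranka : #((insert a s).filter (· ≤ a)) = #s + 1 := by
      rw [filter_true_of_mem fun x hx => ?_, card_insert_of_notMem ha']
      rcases mem_insert.mp hx with rfl | hx
      exacts [le_rfl, (ha x hx).le]
    rw [filter_insert, hranka, filter_congr fun x hx => by rw [hrank x hx]]
    split_ifs with h
    · rw [card_insert_of_notMem fun hm => ha' (mem_filter.mp hm).1, ih,
        card_insert_of_notMem ha']
      omega
    · rw [ih, card_insert_of_notMem ha']
      omega

theorem YoungDiagram.card_filter_cells_eq_sum_rows (μ : YoungDiagram) (p : ℕ → ℕ → Prop)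
    [∀ i j, Decidable (p i j)] :
    #(μ.cells.filter fun c => p c.1 c.2)
      = ∑ i ∈ range (μ.colLen 0), #((range (μ.rowLen i)).filter (p i)) := by
  rw [card_eq_sum_card_fiberwise (f := Prod.fst) (t := range (μ.colLen 0))]
  · refine sum_congr rfl fun i _ => card_nbij' Prod.snd (Prod.mk i) ?_ ?_ ?_ ?_
    · rintro ⟨i', j⟩
      simp +contextual [YoungDiagram.mem_iff_lt_rowLen, eq_comm]
    · intro j
      simp +contextual [YoungDiagram.mem_iff_lt_rowLen]
    · rintro ⟨i', j⟩
      simp +contextual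
    · intro j _
      rfl
  · rintro ⟨i, j⟩ hc
    simp only [coe_filter, Set.mem_ofPred_eq, mem_cells] at hc
    exact mem_range.mpr
      ((YoungDiagram.mem_iff_lt_colLen.mp hc.1).trans_le (μ.colLen_anti 0 j j.zero_le))

namespace SemistandardYoungTableau

variable {μ : YoungDiagram}

theorem mem_of_ne_zero (T : SemistandardYoungTableau μ) {i j : ℕ} (h : T i j ≠ 0) :
    (i, j) ∈ μ :=
  not_imp_comm.mp T.zeros h

def entryCount (T : SemistandardYoungTableau μ) (v : ℕ) : ℕ :=
  #(μ.cells.filter fun c => T c.1 c.2 = v)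

theorem sum_entryCount {T : SemistandardYoungTableau μ} {n : ℕ}
    (hT : ∀ i j, (i, j) ∈ μ → T i j < n) : ∑ v ∈ range n, T.entryCount v = μ.card := by
  refine (card_eq_sum_card_fiberwise fun c hc => ?_).symm
  rw [mem_coe, YoungDiagram.mem_cells] at hc
  exact mem_coe.mpr (mem_range.mpr (hT c.1 c.2 hc))

section BenderKnuth

variable (T : SemistandardYoungTableau μ) (k : ℕ)

def IsFree (i j : ℕ) : Prop :=
  (i, j) ∈ μ ∧
    (T i j = k ∧ T (i + 1) j ≠ k + 1 ∨ T i j = k + 1 ∧ (i = 0 ∨ T (i - 1) j ≠ k))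

instance (i j : ℕ) : Decidable (T.IsFree k i j) := by
  unfold IsFree
  infer_instance

def freeCols (i : ℕ) : Finset ℕ := (range (μ.rowLen i)).filter (T.IsFree k i)

def freeRank (i j : ℕ) : ℕ := #((T.freeCols k i).filter (· ≤ j))

def freeCount (i v : ℕ) : ℕ := #((T.freeCols k i).filter (T i · = v))

/-- The free cells of row `i` read `k, …, k, k + 1, …, k + 1`; the move swaps the numbers of
`k`s and of `k + 1`s among them. -/
def bkEntry (i j : ℕ) : ℕ :=
  if T.IsFree k i j then if T.freeRank k i j ≤ T.freeCount k i (k + 1) then k else k + 1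
  else T i j

variable {T k} {i j : ℕ}

theorem IsFree.mem (h : T.IsFree k i j) : (i, j) ∈ μ := h.1

theorem IsFree.eq_or_eq (h : T.IsFree k i j) : T i j = k ∨ T i j = k + 1 :=
  h.2.imp And.left And.left

theorem mem_freeCols : j ∈ T.freeCols k i ↔ T.IsFree k i j := by
  simp only [freeCols, mem_filter, mem_range, and_iff_right_iff_imp]
  exact fun h => YoungDiagram.mem_iff_lt_rowLen.mp h.mem

theorem eq_succ_below_of_not_isFree (hc : (i, j) ∈ μ) (hf : ¬T.IsFree k i j) (hv : T i j = k) :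
    T (i + 1) j = k + 1 := by
  by_contra h
  exact hf ⟨hc, Or.inl ⟨hv, h⟩⟩

theorem eq_above_of_not_isFree (hc : (i, j) ∈ μ) (hf : ¬T.IsFree k i j) (hv : T i j = k + 1) :
    i ≠ 0 ∧ T (i - 1) j = k := by
  by_contra h
  exact hf ⟨hc, Or.inr ⟨hv, by tauto⟩⟩

theorem not_isFree_of_stacked (hk : T i j = k) (hk1 : T (i + 1) j = k + 1) :
    ¬T.IsFree k i j ∧ ¬T.IsFree k (i + 1) j := by
  simp [IsFree, hk, hk1]

theorem bkEntry_of_not_isFree (h : ¬T.IsFree k i j) : T.bkEntry k i j = T i j := if_neg h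

theorem bkEntry_of_isFree (h : T.IsFree k i j) :
    T.bkEntry k i j = if T.freeRank k i j ≤ T.freeCount k i (k + 1) then k else k + 1 := if_pos h

theorem bkEntry_eq_or_eq_of_isFree (h : T.IsFree k i j) :
    T.bkEntry k i j = k ∨ T.bkEntry k i j = k + 1 := by
  rw [bkEntry_of_isFree h]
  split_ifs <;> simp

theorem bkEntry_of_ne (h1 : T i j ≠ k) (h2 : T i j ≠ k + 1) : T.bkEntry k i j = T i j :=
  bkEntry_of_not_isFree fun h => h.eq_or_eq.elim h1 h2

theorem freeRank_lt_freeRank_succ (h : T.IsFree k i (j + 1)) :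
    T.freeRank k i j < T.freeRank k i (j + 1) := by
  refine card_lt_card ⟨monotone_filter_right _ fun x hx => by omega, fun hsub => ?_⟩
  have := (mem_filter.mp (hsub (mem_filter.mpr ⟨mem_freeCols.mpr h, le_rfl⟩))).2
  omega

theorem freeRank_le_freeCount (h : T.IsFree k i j) (hv : T i j = k) :
    T.freeRank k i j ≤ T.freeCount k i k := by
  refine card_le_card fun x hx => ?_
  rw [mem_filter] at hx ⊢
  have hle : T i x ≤ T i j := T.row_weak_of_le hx.2 h.mem
  rcases (mem_freeCols.mp hx.1).eq_or_eq with h' | h' <;> exact ⟨hx.1, by omega⟩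

theorem freeCount_lt_freeRank (h : T.IsFree k i j) (hv : T i j = k + 1) :
    T.freeCount k i k < T.freeRank k i j := by
  have hsub :
      insert j ((T.freeCols k i).filter (T i · = k)) ⊆ (T.freeCols k i).filter (· ≤ j) := by
    refine insert_subset (mem_filter.mpr ⟨mem_freeCols.mpr h, le_rfl⟩) fun x hx => ?_
    rw [mem_filter] at hx ⊢
    refine ⟨hx.1, not_lt.mp fun hjx => ?_⟩
    have := T.row_weak hjx (mem_freeCols.mp hx.1).mem
    omega
  have hj : j ∉ (T.freeCols k i).filter (T i · = k) := fun hj => by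
    have := (mem_filter.mp hj).2
    omega
  exact Nat.lt_iff_add_one_le.mpr ((card_insert_of_notMem hj).symm.trans_le (card_le_card hsub))

theorem bkEntry_le_bkEntry_right (hc : (i, j + 1) ∈ μ) :
    T.bkEntry k i j ≤ T.bkEntry k i (j + 1) := by
  have hcl : (i, j) ∈ μ := μ.up_left_mem le_rfl (Nat.le_add_right j 1) hc
  have hrow : T i j ≤ T i (j + 1) := T.row_weak (Nat.lt_add_one j) hc
  by_cases h1 : T.IsFree k i j <;> by_cases h2 : T.IsFree k i (j + 1)
  · rw [bkEntry_of_isFree h1, bkEntry_of_isFree h2]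
    have := freeRank_lt_freeRank_succ h2
    split_ifs <;> omega
  · rw [bkEntry_of_not_isFree h2]
    -- a locked `k` at `(i, j + 1)` sits above a `k + 1`, which would also lock `(i, j)`
    have hne : T i (j + 1) ≠ k := fun hk => by
      have hb := eq_succ_below_of_not_isFree hc h2 hk
      have hbm : (i + 1, j + 1) ∈ μ := T.mem_of_ne_zero (by omega)
      have := T.col_strict (Nat.lt_add_one i) (μ.up_left_mem le_rfl (Nat.le_add_right j 1) hbm)
      have := T.row_weak (Nat.lt_add_one j) hbm
      rcases h1.2 with ⟨_, _⟩ | ⟨_, _⟩ <;> omega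
    rcases h1.eq_or_eq with h | h <;> rcases bkEntry_eq_or_eq_of_isFree h1 with h' | h' <;> omega
  · rw [bkEntry_of_not_isFree h1]
    -- a locked `k + 1` at `(i, j)` sits below a `k`, which would also lock `(i, j + 1)`
    have hne : T i j ≠ k + 1 := fun hk1 => by
      obtain ⟨hi, ha⟩ := eq_above_of_not_isFree hcl h1 hk1
      have := T.row_weak (Nat.lt_add_one j) (μ.up_left_mem (i.sub_le 1) le_rfl hc)
      have := T.col_strict (Nat.sub_lt (Nat.pos_of_ne_zero hi) one_pos) hc
      rcases h2.2 with ⟨_, _⟩ | ⟨_, _⟩ <;> omega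
    rcases h2.eq_or_eq with h | h <;> rcases bkEntry_eq_or_eq_of_isFree h2 with h' | h' <;> omega
  · rw [bkEntry_of_not_isFree h1, bkEntry_of_not_isFree h2]
    exact hrow

theorem bkEntry_lt_bkEntry_below (hc : (i + 1, j) ∈ μ) :
    T.bkEntry k i j < T.bkEntry k (i + 1) j := by
  have hcol : T i j < T (i + 1) j := T.col_strict (Nat.lt_add_one i) hc
  by_cases h1 : T.IsFree k i j
  · have : k + 2 ≤ T (i + 1) j := by rcases h1.2 with ⟨_, _⟩ | ⟨_, _⟩ <;> omega
    rw [bkEntry_of_ne (i := i + 1) (by omega) (by omega)]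
    rcases bkEntry_eq_or_eq_of_isFree h1 with h | h <;> omega
  rw [bkEntry_of_not_isFree h1]
  by_cases h2 : T.IsFree k (i + 1) j
  · have hne : T i j ≠ k := fun hk => by
      rcases h2.eq_or_eq with h | h
      · omega
      · exact (not_isFree_of_stacked hk h).2 h2
    rcases h2.eq_or_eq with h | h <;> rcases bkEntry_eq_or_eq_of_isFree h2 with h' | h' <;> omega
  · rw [bkEntry_of_not_isFree h2]
    exact hcol

def benderKnuth (T : SemistandardYoungTableau μ) (k : ℕ) : SemistandardYoungTableau μ where
  entry := T.bkEntry k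
  row_weak' {i j₁ j₂} hj hc := by
    have hmono : MonotoneOn (T.bkEntry k i) (Set.Iio (μ.rowLen i)) :=
      monotoneOn_of_le_add_one Set.ordConnected_Iio fun j _ _ hj =>
        bkEntry_le_bkEntry_right (YoungDiagram.mem_iff_lt_rowLen.mpr hj)
    have h₂ := YoungDiagram.mem_iff_lt_rowLen.mp hc
    exact hmono (hj.trans h₂) h₂ hj.le
  col_strict' {i₁ i₂ j} hi hc := by
    have hmono : StrictMonoOn (T.bkEntry k · j) (Set.Iio (μ.colLen j)) :=
      strictMonoOn_of_lt_add_one Set.ordConnected_Iio fun i _ _ hi =>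
        bkEntry_lt_bkEntry_below (YoungDiagram.mem_iff_lt_colLen.mpr hi)
    have h₂ := YoungDiagram.mem_iff_lt_colLen.mp hc
    exact hmono (hi.trans h₂) h₂ hi
  zeros' h := by
    rw [bkEntry_of_not_isFree fun hf => h hf.mem]
    exact T.zeros h

@[simp]
theorem benderKnuth_apply : T.benderKnuth k i j = T.bkEntry k i j := rfl

theorem IsFree.benderKnuth (h : T.IsFree k i j) : (T.benderKnuth k).IsFree k i j := by
  have below : T.bkEntry k (i + 1) j ≠ k + 1 := by
    by_cases hb : (i + 1, j) ∈ μ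
    · have := T.col_strict (Nat.lt_add_one i) hb
      have : k + 2 ≤ T (i + 1) j := by rcases h.2 with ⟨_, _⟩ | ⟨_, _⟩ <;> omega
      rw [bkEntry_of_ne (by omega) (by omega)]
      omega
    · rw [bkEntry_of_not_isFree fun h' => hb h'.mem, T.zeros hb]
      omega
  have above : i = 0 ∨ T.bkEntry k (i - 1) j ≠ k := by
    refine i.eq_zero_or_pos.imp_right fun hi => ?_
    have := T.col_strict (Nat.sub_lt hi one_pos) h.mem
    have : T (i - 1) j < k := by rcases h.2 with ⟨_, _⟩ | ⟨_, _⟩ <;> omega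
    rw [bkEntry_of_ne (by omega) (by omega)]
    omega
  refine ⟨h.mem, ?_⟩
  rcases bkEntry_eq_or_eq_of_isFree h with hv | hv
  exacts [Or.inl ⟨hv, below⟩, Or.inr ⟨hv, above⟩]

theorem not_isFree_benderKnuth (h : ¬T.IsFree k i j) : ¬(T.benderKnuth k).IsFree k i j := by
  by_cases hc : (i, j) ∈ μ
  swap
  · exact fun h' => hc h'.mem
  by_cases hk : T i j = k
  · have hb := eq_succ_below_of_not_isFree hc h hk
    refine (not_isFree_of_stacked (T := T.benderKnuth k) ?_ ?_).1
    · rw [benderKnuth_apply, bkEntry_of_not_isFree h, hk]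
    · rw [benderKnuth_apply, bkEntry_of_not_isFree (not_isFree_of_stacked hk hb).2, hb]
  by_cases hk1 : T i j = k + 1
  · obtain ⟨hi, ha⟩ := eq_above_of_not_isFree hc h hk1
    obtain ⟨m, rfl⟩ : ∃ m, i = m + 1 := Nat.exists_eq_succ_of_ne_zero hi
    rw [Nat.add_sub_cancel] at ha
    refine (not_isFree_of_stacked (T := T.benderKnuth k) ?_ ?_).2
    · rw [benderKnuth_apply, bkEntry_of_not_isFree (not_isFree_of_stacked ha hk1).1, ha]
    · rw [benderKnuth_apply, bkEntry_of_not_isFree h, hk1]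
  · refine fun h' => h'.eq_or_eq.elim ?_ ?_ <;>
      rw [benderKnuth_apply, bkEntry_of_not_isFree h] <;> assumption

theorem isFree_benderKnuth : (T.benderKnuth k).IsFree k i j ↔ T.IsFree k i j :=
  ⟨not_imp_not.mp not_isFree_benderKnuth, IsFree.benderKnuth⟩

theorem freeCols_benderKnuth : (T.benderKnuth k).freeCols k i = T.freeCols k i := by
  ext j
  rw [mem_freeCols, mem_freeCols, isFree_benderKnuth]

theorem freeRank_benderKnuth : (T.benderKnuth k).freeRank k i j = T.freeRank k i j := by
  rw [freeRank, freeRank, freeCols_benderKnuth]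

theorem freeCount_add_freeCount_succ :
    T.freeCount k i k + T.freeCount k i (k + 1) = #(T.freeCols k i) := by
  rw [freeCount, freeCount, ← card_filter_add_card_filter_not (s := T.freeCols k i) (T i · = k)]
  congr 2
  refine filter_congr fun j hj => ?_
  have := (mem_freeCols.mp hj).eq_or_eq
  omega

theorem freeCount_benderKnuth_self :
    (T.benderKnuth k).freeCount k i k = T.freeCount k i (k + 1) := by
  have hle : T.freeCount k i (k + 1) ≤ #(T.freeCols k i) := card_filter_le _ _
  rw [freeCount, freeCols_benderKnuth, ← min_eq_left hle,
    ← card_filter_card_filter_le_le (T.freeCols k i)]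
  congr 1
  refine filter_congr fun j hj => ?_
  rw [benderKnuth_apply, bkEntry_of_isFree (mem_freeCols.mp hj)]
  split_ifs <;> simp_all [freeRank]

theorem freeCount_benderKnuth_succ :
    (T.benderKnuth k).freeCount k i (k + 1) = T.freeCount k i k := by
  have h := (T.benderKnuth k).freeCount_add_freeCount_succ (k := k) (i := i)
  rw [freeCount_benderKnuth_self, freeCols_benderKnuth, ← T.freeCount_add_freeCount_succ] at h
  omega

theorem benderKnuth_benderKnuth : (T.benderKnuth k).benderKnuth k = T := by
  ext i j
  by_cases hf : T.IsFree k i j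
  · rw [benderKnuth_apply, bkEntry_of_isFree (isFree_benderKnuth.mpr hf), freeRank_benderKnuth,
      freeCount_benderKnuth_succ]
    rcases hf.eq_or_eq with hv | hv
    · rw [if_pos (freeRank_le_freeCount hf hv), hv]
    · rw [if_neg (not_le.mpr (freeCount_lt_freeRank hf hv)), hv]
  · rw [benderKnuth_apply, bkEntry_of_not_isFree (mt isFree_benderKnuth.mp hf), benderKnuth_apply,
      bkEntry_of_not_isFree hf]

variable (T k) in
def lockedCells (v : ℕ) : Finset (ℕ × ℕ) :=
  μ.cells.filter fun c => ¬T.IsFree k c.1 c.2 ∧ T c.1 c.2 = v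

theorem entryCount_eq_card_lockedCells_add (v : ℕ) :
    T.entryCount v = #(T.lockedCells k v) + ∑ i ∈ range (μ.colLen 0), T.freeCount k i v := by
  rw [entryCount, ← card_filter_add_card_filter_not (p := fun c => ¬T.IsFree k c.1 c.2),
    filter_filter, filter_filter, lockedCells]
  simp_rw [not_not, and_comm (a := T _ _ = v)]
  rw [YoungDiagram.card_filter_cells_eq_sum_rows μ fun i j => T.IsFree k i j ∧ T i j = v]
  simp_rw [freeCount, freeCols, filter_filter]

theorem lockedCells_benderKnuth (v : ℕ) :
    (T.benderKnuth k).lockedCells k v = T.lockedCells k v := by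
  refine filter_congr fun c _ => ?_
  rw [isFree_benderKnuth, benderKnuth_apply]
  exact and_congr_right fun h => by rw [bkEntry_of_not_isFree h]

/-- Locked cells come in vertical pairs `k` over `k + 1`. -/
theorem card_lockedCells_self : #(T.lockedCells k k) = #(T.lockedCells k (k + 1)) := by
  refine card_nbij' (fun c => (c.1 + 1, c.2)) (fun c => (c.1 - 1, c.2)) ?_ ?_ ?_ ?_
  · rintro ⟨i, j⟩ hc
    simp only [lockedCells, coe_filter, Set.mem_ofPred_eq, YoungDiagram.mem_cells] at hc ⊢
    have hb := eq_succ_below_of_not_isFree hc.1 hc.2.1 hc.2.2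
    exact ⟨T.mem_of_ne_zero (by omega), (not_isFree_of_stacked hc.2.2 hb).2, hb⟩
  · rintro ⟨i, j⟩ hc
    simp only [lockedCells, coe_filter, Set.mem_ofPred_eq, YoungDiagram.mem_cells] at hc ⊢
    obtain ⟨hi, ha⟩ := eq_above_of_not_isFree hc.1 hc.2.1 hc.2.2
    obtain ⟨m, rfl⟩ : ∃ m, i = m + 1 := Nat.exists_eq_succ_of_ne_zero hi
    rw [Nat.add_sub_cancel] at ha ⊢
    exact ⟨μ.up_left_mem (Nat.le_add_right m 1) le_rfl hc.1,
      (not_isFree_of_stacked ha hc.2.2).1, ha⟩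
  · rintro ⟨i, j⟩ -
    simp
  · rintro ⟨i, j⟩ hc
    simp only [lockedCells, coe_filter, Set.mem_ofPred_eq, YoungDiagram.mem_cells] at hc
    have := (eq_above_of_not_isFree hc.1 hc.2.1 hc.2.2).1
    simp only [Prod.mk.injEq, and_true]
    omega

theorem entryCount_benderKnuth_self : (T.benderKnuth k).entryCount k = T.entryCount (k + 1) := by
  simp_rw [entryCount_eq_card_lockedCells_add (k := k), lockedCells_benderKnuth,
    card_lockedCells_self, freeCount_benderKnuth_self]

theorem entryCount_benderKnuth_succ :
    (T.benderKnuth k).entryCount (k + 1) = T.entryCount k := by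
  simp_rw [entryCount_eq_card_lockedCells_add (k := k), lockedCells_benderKnuth,
    card_lockedCells_self, freeCount_benderKnuth_succ]

theorem entryCount_benderKnuth_of_ne {v : ℕ} (h1 : v ≠ k) (h2 : v ≠ k + 1) :
    (T.benderKnuth k).entryCount v = T.entryCount v := by
  refine congrArg card (filter_congr fun c _ => ?_)
  by_cases hf : T.IsFree k c.1 c.2
  · rcases hf.eq_or_eq with hv | hv <;> rcases bkEntry_eq_or_eq_of_isFree hf with hv' | hv' <;>
      simp only [benderKnuth_apply, hv, hv'] <;> omega
  · rw [benderKnuth_apply, bkEntry_of_not_isFree hf]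

theorem benderKnuth_lt {n : ℕ} (hT : ∀ i j, (i, j) ∈ μ → T i j < n) (hk : k + 1 < n) :
    ∀ i j, (i, j) ∈ μ → T.benderKnuth k i j < n := by
  intro i j hij
  by_cases hf : T.IsFree k i j
  · rcases bkEntry_eq_or_eq_of_isFree hf with h | h <;> rw [benderKnuth_apply, h] <;> omega
  · rw [benderKnuth_apply, bkEntry_of_not_isFree hf]
    exact hT i j hij

end BenderKnuth

def benderKnuthChain (T : SemistandardYoungTableau μ) : ℕ → SemistandardYoungTableau μ
  | 0 => T
  | m + 1 => (T.benderKnuthChain m).benderKnuth m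

theorem benderKnuth_involutive (k : ℕ) :
    Function.Involutive fun T : SemistandardYoungTableau μ => T.benderKnuth k :=
  fun T => T.benderKnuth_benderKnuth

theorem benderKnuthChain_injective :
    ∀ m, Function.Injective fun T : SemistandardYoungTableau μ => T.benderKnuthChain m
  | 0 => Function.injective_id
  | m + 1 => (benderKnuth_involutive m).injective.comp (benderKnuthChain_injective m)

theorem benderKnuthChain_lt {T : SemistandardYoungTableau μ} {n : ℕ}
    (hT : ∀ i j, (i, j) ∈ μ → T i j < n) : ∀ {m}, m < n →
    ∀ i j, (i, j) ∈ μ → T.benderKnuthChain m i j < n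
  | 0, _ => hT
  | m + 1, hm => (T.benderKnuthChain m).benderKnuth_lt (benderKnuthChain_lt hT (by omega)) hm

theorem entryCount_benderKnuthChain (T : SemistandardYoungTableau μ) (m v : ℕ) :
    (T.benderKnuthChain m).entryCount v =
      if v < m then T.entryCount (v + 1) else if v = m then T.entryCount 0 else T.entryCount v := by
  induction m generalizing v with
  | zero =>
    rw [if_neg v.not_lt_zero]
    split_ifs with h
    · rw [h]
      rfl
    · rfl
  | succ m ih =>
    simp only [benderKnuthChain]
    obtain rfl | h1 := eq_or_ne v m
    · rw [entryCount_benderKnuth_self, ih]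
      simp
    obtain rfl | h2 := eq_or_ne v (m + 1)
    · rw [entryCount_benderKnuth_succ, ih]
      simp
    · rw [entryCount_benderKnuth_of_ne h1 h2, ih]
      split_ifs <;> first | rfl | omega

theorem sum_mul_entryCount_benderKnuthChain_add_card {T : SemistandardYoungTableau μ} {m : ℕ}
    (hT : ∀ i j, (i, j) ∈ μ → T i j < m + 1) :
    ∑ v ∈ range (m + 1), v * (T.benderKnuthChain m).entryCount v + μ.card =
      ∑ v ∈ range (m + 1), v * T.entryCount v + (m + 1) * T.entryCount 0 := by
  rw [← sum_entryCount hT, sum_range_succ, sum_range_succ' (fun v => v * T.entryCount v),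
    sum_range_succ' T.entryCount, entryCount_benderKnuthChain, if_neg (lt_irrefl m), if_pos rfl,
    sum_congr rfl fun v hv => by rw [entryCount_benderKnuthChain, if_pos (mem_range.mp hv)]]
  simp only [add_mul, one_mul, sum_add_distrib]
  ring

end SemistandardYoungTableau

namespace SSYTn

variable {μ : YoungDiagram} {m : ℕ}

def rotate (T : SSYTn μ (m + 1)) : SSYTn μ (m + 1) :=
  ⟨T.1.benderKnuthChain m, SemistandardYoungTableau.benderKnuthChain_lt T.2 (Nat.lt_add_one m)⟩

theorem rotate_bijective : Function.Bijective (rotate : SSYTn μ (m + 1) → SSYTn μ (m + 1)) :=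
  Finite.injective_iff_bijective.mp fun _ _ h =>
    Subtype.ext (SemistandardYoungTableau.benderKnuthChain_injective m (congrArg Subtype.val h))

theorem sum_mul_ssytContent (T : SSYTn μ (m + 1)) :
    ∑ i : Fin (m + 1), (i : ℕ) * ssytContent μ (m + 1) T i =
      ∑ v ∈ range (m + 1), v * T.1.entryCount v :=
  Fin.sum_univ_eq_sum_range (fun v => v * T.1.entryCount v) (m + 1)

theorem weight_rotate_add_card_modEq (T : SSYTn μ (m + 1)) :
    ∑ i : Fin (m + 1), (i : ℕ) * ssytContent μ (m + 1) T.rotate i + μ.card ≡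
      ∑ i : Fin (m + 1), (i : ℕ) * ssytContent μ (m + 1) T i [MOD m + 1] := by
  rw [sum_mul_ssytContent, sum_mul_ssytContent, rotate,
    SemistandardYoungTableau.sum_mul_entryCount_benderKnuthChain_add_card T.2]
  exact Nat.add_mul_mod_self_left _ _ _

end SSYTn

theorem stmt9_general (n : ℕ) (μ : YoungDiagram)
    (hgcd : Nat.Coprime n μ.card)
    (M : ℕ) (hM : Fintype.card (SSYTn μ n) = n * M) :
    ((Polynomial.X : Polynomial ℤ) ^ n - 1) ∣
      (∑ T : SSYTn μ n,
          (Polynomial.X : Polynomial ℤ) ^ (∑ i : Fin n, (i : ℕ) * ssytContent μ n T i))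
        - (M : Polynomial ℤ) * ∑ k ∈ Finset.range n, (Polynomial.X : Polynomial ℤ) ^ k := by
  obtain _ | m := n
  · simp [hM]
  refine X_pow_sub_one_dvd_sub_mul_geom_sum m.succ_ne_zero
    (pow_sub_one_dvd_sub_one_mul_of_coprime hgcd.symm
      (pow_sub_one_dvd_sub_one_mul_sum_of_bijective _ SSYTn.rotate_bijective
        SSYTn.weight_rotate_add_card_modEq)) ?_
  simp [Polynomial.eval_finsetSum, hM]

theorem stmt9 (n : ℕ) (μ : YoungDiagram) (hlen : μ.colLen 0 < n)
    (hgcd : Nat.Coprime n μ.card)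
    (M : ℕ) (hM : Fintype.card (SSYTn μ n) = n * M) :
    ((Polynomial.X : Polynomial ℤ) ^ n - 1) ∣
      (∑ T : SSYTn μ n,
          (Polynomial.X : Polynomial ℤ) ^ (∑ i : Fin n, (i : ℕ) * ssytContent μ n T i))
        - (M : Polynomial ℤ) * ∑ k ∈ Finset.range n, (Polynomial.X : Polynomial ℤ) ^ k :=
  stmt9_general n μ hgcd M hM
end

section
/- Let λ be a partition with ℓ(λ) < n and gcd(n, |λ|) = 1. Let g : SSYT_n(λ) → SSYT_n(λ) be a bijection with cont(g(T)) = c(cont(T)) for all T (c the cyclic shift), and suppose that for each i = 1, …, n−1 there exists a bijection t_i of SSYT_n(λ) with cont(t_i(T)) = s_i(cont(T)) for all T and t_i ∘ g^n = g^n ∘ t_i. Then g^n restricts to a bijection of SSYT_n(λ, α) for every α, and the order of g as a permutation of SSYT_n(λ) equals n · lcm{ order of g^n restricted to SSYT_n(λ, α) : α ∈ cont⁺(λ) }, where cont⁺(λ) is the set of weakly decreasing contents α (α_1 ≥ α_2 ≥ ⋯ ≥ α_n) with SSYT_n(λ, α) nonempty. -/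
open Finset

/-!
Since `g` rotates contents, `gⁿ` preserves them. A content sums to `|λ|`, which is prime to `n`,
so it is fixed by no rotation `cᵐ` with `n ∤ m`; hence `n` divides the order of `g`, and
`ord g = n · ord gⁿ`. The order of `gⁿ` is the lcm of its orders on the content fibres, and the
bijections `tᵢ` commuting with `gⁿ` carry the fibre over `α` onto the fibre over `sᵢ α`
compatibly with `gⁿ`. As adjacent transpositions generate `Sₙ`, every fibre is thus matched with
a fibre over a weakly decreasing content.
-/

open Function Equiv Equiv.Perm
open Fin.NatCast

section CyclicShift

variable {n : ℕ} [NeZero n] {A : Type*}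

theorem cycShift_apply (x : Fin n → A) (i : Fin n) : cycShift x i = x (i - 1) := by
  obtain ⟨k, rfl⟩ : ∃ k, n = k + 1 := Nat.exists_eq_succ_of_ne_zero (NeZero.ne n)
  unfold cycShift
  split_ifs with hi <;> congr 1 <;> ext <;> simp [Fin.coe_sub_one, Fin.ext_iff, hi]

theorem iterate_cycShift_apply (x : Fin n → A) (k : ℕ) (i : Fin n) :
    cycShift^[k] x i = x (i - k) := by
  induction k generalizing i with
  | zero => simp
  | succ k ih =>
    rw [iterate_succ_apply', cycShift_apply, ih, Nat.cast_succ, sub_sub, add_comm]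

theorem iterate_cycShift_self (x : Fin n → A) : cycShift^[n] x = x :=
  funext fun i ↦ by rw [iterate_cycShift_apply, Fin.natCast_self, sub_zero]

theorem Function.Periodic.sum_range_mul {M : Type*} [AddCommMonoid M] {f : ℕ → M} {d : ℕ}
    (hf : Periodic f d) (e : ℕ) : ∑ j ∈ range (e * d), f j = e • ∑ j ∈ range d, f j := by
  induction e with
  | zero => simp
  | succ e ih =>
    rw [add_mul, one_mul, sum_range_add, ih, succ_nsmul]
    congr 1
    exact sum_congr rfl fun j _ ↦ by simpa [add_comm] using hf.nat_mul e j

theorem dvd_of_iterate_cycShift_eq_self {x : Fin n → ℕ} {m : ℕ}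
    (hx : Nat.Coprime n (∑ i, x i)) (hm : cycShift^[m] x = x) : n ∣ m := by
  set d := m.gcd n
  have hd : IsPeriodicPt cycShift d x := IsPeriodicPt.gcd hm (iterate_cycShift_self x)
  have hper : Periodic (fun j : ℕ ↦ x j) d := fun j ↦ by
    simpa [iterate_cycShift_apply] using (congrFun hd.eq (j + d : Fin n)).symm
  have hsum : ∑ i, x i = n / d * ∑ j ∈ range d, x j := by
    rw [← smul_eq_mul, ← hper.sum_range_mul, Nat.div_mul_cancel (Nat.gcd_dvd_right m n),
      ← Fin.sum_univ_eq_sum_range]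
    simp
  have hdn : d = n := Nat.eq_of_dvd_of_div_eq_one (Nat.gcd_dvd_right m n) <|
    Nat.eq_one_of_dvd_coprimes hx (Nat.div_dvd_of_dvd (Nat.gcd_dvd_right m n))
      (hsum ▸ dvd_mul_right _ _)
  exact hdn ▸ Nat.gcd_dvd_left m n

end CyclicShift

theorem Nat.sInf_setOf_pos_dvd {k : ℕ} (hk : 0 < k) : sInf {m | 0 < m ∧ k ∣ m} = k :=
  le_antisymm (Nat.sInf_le ⟨hk, dvd_rfl⟩)
    (le_csInf ⟨k, hk, dvd_rfl⟩ fun _ hm ↦ Nat.le_of_dvd hm.1 hm.2)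

section Fibers

variable {X B : Type*} (φ : X → B) (h : Perm X)

/-- The order of `h` on the fibre `φ ⁻¹' {b}` (the paper's `𝔬_λ(b)` when `h = prⁿ`). -/
noncomputable def fiberOrder (b : B) : ℕ :=
  sInf {m | 0 < m ∧ ∀ x, φ x = b → (h ^ m) x = x}

variable {φ h}

theorem fiberOrder_dvd_iff [Finite X] (hφ : ∀ x, φ (h x) = φ x) {b : B} {m : ℕ} :
    fiberOrder φ h b ∣ m ↔ ∀ x, φ x = b → (h ^ m) x = x := by
  set h' := h.subtypePerm (p := fun x ↦ φ x = b) fun x ↦ by rw [hφ]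
  have key : ∀ m, (∀ x, φ x = b → (h ^ m) x = x) ↔ orderOf h' ∣ m := fun m ↦ by
    simp [orderOf_dvd_iff_pow_eq_one, h', subtypePerm_pow, Perm.ext_iff, Subtype.ext_iff]
  have : fiberOrder φ h b = orderOf h' := by
    simp_rw [fiberOrder, key]
    exact Nat.sInf_setOf_pos_dvd (orderOf_pos h')
  rw [this, key]

end Fibers

section Symmetries

variable {X ι A : Type*}

/-- Permutations `σ` of positions realised on `X` by a bijection commuting with `h`, as the
crystal reflections `𝕤ᵢ` realise the transpositions `sᵢ` for `h = prⁿ`. -/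
def liftablePerms (φ : X → ι → A) (h : Perm X) : Submonoid (Perm ι) where
  carrier := {σ | ∃ t : Perm X, Commute t h ∧ ∀ x, φ (t x) = φ x ∘ σ}
  one_mem' := ⟨1, Commute.one_left h, fun _ ↦ rfl⟩
  mul_mem' := by
    rintro σ τ ⟨s, hs, hsφ⟩ ⟨t, ht, htφ⟩
    exact ⟨t * s, ht.mul_left hs, fun x ↦ by simp [hsφ, htφ, comp_assoc]⟩

theorem fixes_fiber_comp_iff {φ : X → ι → A} {h : Perm X} {σ : Perm ι}
    (hσ : σ ∈ liftablePerms φ h) (m : ℕ) (a : ι → A) :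
    (∀ y, φ y = a ∘ σ → (h ^ m) y = y) ↔ ∀ x, φ x = a → (h ^ m) x = x := by
  obtain ⟨t, htc, htφ⟩ := hσ
  have htc' : Commute t (h ^ m) := htc.pow_right m
  constructor
  · intro hy x hx
    apply t.injective
    rw [← Perm.mul_apply, htc'.eq, Perm.mul_apply, hy _ (by rw [htφ, hx])]
  · intro hx y hy
    have hty : φ (t.symm y) = a := by
      have := htφ (t.symm y)
      rw [apply_symm_apply, hy] at this
      exact (σ.surjective.injective_comp_right this).symm
    rw [← t.apply_symm_apply y, ← Perm.mul_apply, ← htc'.eq, Perm.mul_apply, hx _ hty]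

theorem orderOf_eq_lcm_fiberOrder_antitone [Fintype X] [LinearOrder A] {n : ℕ}
    {φ : X → Fin n → A} {h : Perm X} (hφ : ∀ x, φ (h x) = φ x) (hlift : liftablePerms φ h = ⊤) :
    orderOf h = ((univ.image φ).filter fun a ↦ ∀ j k : Fin n, j ≤ k → a k ≤ a j).lcm
      (fiberOrder φ h) := by
  refine Nat.dvd_antisymm (orderOf_dvd_of_pow_eq_one (Perm.ext fun x ↦ ?_))
    (Finset.lcm_dvd fun a _ ↦ (fiberOrder_dvd_iff hφ).2 fun x _ ↦ by simp [pow_orderOf_eq_one])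
  set σ := Tuple.sort (OrderDual.toDual ∘ φ x)
  have hσ : σ ∈ liftablePerms φ h := hlift ▸ Submonoid.mem_top σ
  obtain ⟨t, -, htφ⟩ := id hσ
  have hsorted : φ x ∘ σ ∈ (univ.image φ).filter fun a ↦ ∀ j k : Fin n, j ≤ k → a k ≤ a j :=
    mem_filter.2 ⟨mem_image.2 ⟨t x, mem_univ _, htφ x⟩,
      fun _ _ hjk ↦ Tuple.monotone_sort (OrderDual.toDual ∘ φ x) hjk⟩
  exact (fixes_fiber_comp_iff hσ _ _).1 ((fiberOrder_dvd_iff hφ).1 (dvd_lcm hsorted)) x rfl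

end Symmetries

theorem sum_ssytContent (μ : YoungDiagram) (n : ℕ) (T : SSYTn μ n) :
    ∑ k, ssytContent μ n T k = μ.card := by
  rw [YoungDiagram.card, card_eq_sum_card_fiberwise (f := fun c ↦ T.1 c.1 c.2) (t := range n)
    fun c hc ↦ mem_range.2 (T.2 _ _ ((YoungDiagram.mem_cells _).1 hc))]
  exact Fin.sum_univ_eq_sum_range (fun k ↦ #{c ∈ μ.cells | T.1 c.1 c.2 = k}) n

theorem SSYTn.nonempty {μ : YoungDiagram} {n : ℕ} (hlen : μ.colLen 0 < n) :
    Nonempty (SSYTn μ n) :=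
  ⟨⟨.highestWeight μ, fun i j hij ↦ by
    rw [SemistandardYoungTableau.highestWeight_apply, if_pos hij]
    exact (YoungDiagram.mem_iff_lt_colLen.1 hij).trans_le (μ.colLen_anti 0 j j.zero_le) |>.trans
      hlen⟩⟩

theorem stmt14 (n : ℕ) (μ : YoungDiagram) (hlen : μ.colLen 0 < n)
    (hgcd : Nat.Coprime n μ.card)
    (g : Equiv.Perm (SSYTn μ n))
    (hg : ∀ T, ssytContent μ n (g T) = cycShift (ssytContent μ n T))
    (ht : ∀ (i : ℕ) (_ : 1 ≤ i) (_ : i ≤ n - 1), ∃ t : Equiv.Perm (SSYTn μ n),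
        (∀ T, ssytContent μ n (t T)
          = ssytContent μ n T ∘ Equiv.swap (⟨i - 1, by omega⟩ : Fin n) ⟨i, by omega⟩) ∧
        t * g ^ n = g ^ n * t) :
    (∀ α : Fin n → ℕ,
        Set.BijOn (g ^ n) {T | ssytContent μ n T = α} {T | ssytContent μ n T = α}) ∧
    orderOf g = n * Finset.lcm
        (((Finset.univ : Finset (SSYTn μ n)).image (ssytContent μ n)).filter
          (fun α => ∀ j k : Fin n, j ≤ k → α k ≤ α j))
        (fun α => sInf {m : ℕ | 0 < m ∧ ∀ T, ssytContent μ n T = α → ((g ^ n) ^ m) T = T}) := by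
  obtain ⟨k, rfl⟩ : ∃ k, n = k + 1 := Nat.exists_eq_succ_of_ne_zero (by omega)
  have hcont (m : ℕ) (T : SSYTn μ (k + 1)) :
      ssytContent μ (k + 1) ((g ^ m) T) = cycShift^[m] (ssytContent μ (k + 1) T) := by
    rw [coe_pow]; exact Semiconj.iterate_right hg m T
  have hgn (T : SSYTn μ (k + 1)) :
      ssytContent μ (k + 1) ((g ^ (k + 1)) T) = ssytContent μ (k + 1) T := by
    rw [hcont, iterate_cycShift_self]
  have hdvd : k + 1 ∣ orderOf g := by
    obtain ⟨T⟩ := SSYTn.nonempty hlen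
    refine dvd_of_iterate_cycShift_eq_self (x := ssytContent μ (k + 1) T)
      (by rwa [sum_ssytContent]) ?_
    rw [← hcont, pow_orderOf_eq_one, one_apply]
  have hlift : liftablePerms (ssytContent μ (k + 1)) (g ^ (k + 1)) = ⊤ := by
    rw [eq_top_iff, ← mclosure_swap_castSucc_succ, Submonoid.closure_le]
    rintro _ ⟨i, rfl⟩
    obtain ⟨t, htφ, htc⟩ := ht (i + 1) (by omega) (by omega)
    exact ⟨t, htc, htφ⟩
  refine ⟨fun α ↦ (g ^ (k + 1)).bijOn fun T ↦ by simp [hgn], ?_⟩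
  calc orderOf g = (k + 1) * orderOf (g ^ (k + 1)) := by
        rw [orderOf_pow_of_dvd k.succ_ne_zero hdvd, Nat.mul_div_cancel' hdvd]
    _ = _ := congrArg _ (orderOf_eq_lcm_fiberOrder_antitone hgn hlift)
end
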